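/- If {h_1,…,h_m} is a Gröbner basis of C̄^⊥ and for fixed i the set C_i := { c_i : (0,…,0,c_i,c_{i+1},…,c_m) ∈ C } is the i-th sectional shortened code, then C_i is a cyclic code of length l_i whose dual has generator polynomial h_{ii}(t); consequently the generator polynomial of C_i is g_{ii}(t), the i-th diagonal entry of any POT Gröbner basis of C̄. -/

import Mathlib

open Polynomial

noncomputable def stdGen {F : Type*} [CommRing F] {m : ℕ} (l : Fin m → ℕ) (i : Fin m) :
    Fin m → Polynomial F :=
  fun j => if j = i then Polynomial.X ^ (l i) - 1 else 0

noncomputable def pairing {F : Type*} [Field F] {m : ℕ} (l : Fin m → ℕ)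
    (u v : Fin m → Polynomial F) : F :=
  ∑ i : Fin m, ∑ j ∈ Finset.range (l i),
    ((u i) %ₘ (Polynomial.X ^ (l i) - 1)).coeff j *
      ((v i) %ₘ (Polynomial.X ^ (l i) - 1)).coeff j

/-!
Both sectional codes are ideals of `F[t]`, so each is generated by any of its nonzero elements of
minimal degree: `g_{ii}` for `C_i`, and `h_{ii}` for the code `D_i` of `i`-th entries of vectors
of `C̄^⊥` vanishing above `i`. It remains to see that `D_i` is the dual of `C_i`. After passing to
coefficient vectors this is the duality between shortening and puncturing: a `q` orthogonal to
`C_i` is, away from the blocks below `i`, the reduction of a vector of `C̄^⊥`; replacing that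
vector's entries above `i` by `0` and its `i`-th entry by `q` does not change its reduction, so
keeps it in `C̄^⊥`.
-/

section Sectional

variable {R ι : Type*} [CommSemiring R]

/-- The paper's sectional code `C_i` is `sectionalIdeal C (· < i) i`. -/
def sectionalIdeal (E : Submodule R (ι → R)) (P : ι → Prop) (i : ι) : Ideal R :=
  (E ⊓ Submodule.pi {k | P k} fun _ => ⊥).map (LinearMap.proj i)

theorem mem_sectionalIdeal {E : Submodule R (ι → R)} {P : ι → Prop} {i : ι} {p : R} :
    p ∈ sectionalIdeal E P i ↔ ∃ c ∈ E, (∀ k, P k → c k = 0) ∧ c i = p := by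
  simp [sectionalIdeal, Submodule.mem_pi, and_assoc]

end Sectional

theorem Polynomial.mem_iff_dvd_of_degree_le {K : Type*} [Field K] {I : Ideal K[X]} {g : K[X]}
    (hg : g ∈ I) (hg0 : g ≠ 0) (hmin : ∀ p ∈ I, p ≠ 0 → g.degree ≤ p.degree) (p : K[X]) :
    p ∈ I ↔ g ∣ p := by
  refine ⟨fun hp => ?_, fun ⟨s, hs⟩ => hs ▸ I.mul_mem_right s hg⟩
  have hmod : p % g ∈ I := by
    rw [EuclideanDomain.mod_eq_sub_mul_div]
    exact I.sub_mem hp (I.mul_mem_right _ hg)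
  by_contra hdvd
  have hne : p % g ≠ 0 := fun h => hdvd (EuclideanDomain.mod_eq_zero.mp h)
  exact (hmin _ hmod hne).not_gt (EuclideanDomain.mod_lt _ hg0)

theorem mem_sectionalIdeal_iff_dvd {K ι : Type*} [Field K] {E : Submodule K[X] (ι → K[X])}
    {P : ι → Prop} {i : ι} {v : ι → K[X]} (hv : v ∈ E) (hvP : ∀ k, P k → v k = 0)
    (hv0 : v i ≠ 0)
    (hmin : ∀ c ∈ E, (∀ k, P k → c k = 0) → c i ≠ 0 → (v i).degree ≤ (c i).degree)
    (p : K[X]) : p ∈ sectionalIdeal E P i ↔ v i ∣ p := by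
  refine Polynomial.mem_iff_dvd_of_degree_le (mem_sectionalIdeal.2 ⟨v, hv, hvP, rfl⟩) hv0 ?_ p
  intro q hq hq0
  obtain ⟨c, hc, hcP, rfl⟩ := mem_sectionalIdeal.1 hq
  exact hmin c hc hcP hq0

/-- The dual of a shortened code is contained in the punctured dual code. -/
theorem exists_orthogonal_eqOn_compl {K ι : Type*} [Field K] [Fintype ι]
    (A : Submodule K (ι → K)) (S : Set ι) (y : ι → K)
    (hy : ∀ x ∈ A, (∀ a ∈ S, x a = 0) → x ⬝ᵥ y = 0) :
    ∃ d : ι → K, (∀ x ∈ A, x ⬝ᵥ d = 0) ∧ Set.EqOn d y Sᶜ := by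
  classical
  let W : Submodule K (ι → K) := Submodule.pi S fun _ => (⊥ : Submodule K K)
  have hyW : dotProductEquiv K ι y ∈ (A ⊓ W).dualAnnihilator := by
    rw [Submodule.mem_dualAnnihilator]
    rintro x ⟨hxA, hxW⟩
    rw [dotProductEquiv_apply_apply, dotProduct_comm]
    exact hy x hxA fun a ha => (Submodule.mem_bot K).1 (Submodule.mem_pi.1 hxW a ha)
  rw [Subspace.dualAnnihilator_inf_eq, Submodule.mem_sup] at hyW
  obtain ⟨φ, hφ, ψ, hψ, hsum⟩ := hyW
  refine ⟨(dotProductEquiv K ι).symm φ, fun x hx => ?_, fun a ha => ?_⟩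
  · rw [dotProduct_comm, ← dotProductEquiv_apply_apply, LinearEquiv.apply_symm_apply]
    exact (Submodule.mem_dualAnnihilator φ).1 hφ x hx
  · have hsingle : Pi.single a 1 ∈ W := Submodule.mem_pi.2 fun b hb => by
      rw [Pi.single_eq_of_ne (fun h : b = a => ha (h ▸ hb))]
      exact Submodule.zero_mem _
    have hψa : ψ (Pi.single a 1) = 0 := (Submodule.mem_dualAnnihilator ψ).1 hψ _ hsingle
    rw [← (dotProductEquiv K ι).symm_apply_apply y, ← hsum, map_add, Pi.add_apply]
    simp [hψa]

section Reduction

variable {F : Type*} [Field F] {m : ℕ} (l : Fin m → ℕ)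

/-- Coordinates in `⊕ F[t]/(t^{l_j} - 1)`. -/
noncomputable def reduce : (Fin m → F[X]) →ₗ[F] (Σ j, Fin (l j)) → F :=
  LinearMap.pi fun a => lcoeff F a.2 ∘ₗ modByMonicHom (X ^ l a.1 - 1) ∘ₗ LinearMap.proj a.1

theorem reduce_apply (c : Fin m → F[X]) (a : Σ j, Fin (l j)) :
    reduce l c a = (c a.1 %ₘ (X ^ l a.1 - 1)).coeff a.2 :=
  rfl

theorem reduce_piecewise (T : Set (Fin m)) [DecidablePred (· ∈ T)] (c c' : Fin m → F[X])
    (a : Σ j, Fin (l j)) :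
    reduce l (T.piecewise c c') a = if a.1 ∈ T then reduce l c a else reduce l c' a := by
  simp only [reduce_apply, Set.piecewise]
  split_ifs <;> rfl

theorem pairing_eq_dotProduct (u v : Fin m → F[X]) :
    pairing l u v = reduce l u ⬝ᵥ reduce l v := by
  rw [dotProduct, Fintype.sum_sigma]
  exact Finset.sum_congr rfl fun j _ => (Fin.sum_univ_eq_sum_range _ _).symm

theorem pairing_eq_sum_range_of_triangular {i : Fin m} {u v : Fin m → F[X]}
    (hu : ∀ k, k < i → u k = 0) (hv : ∀ k, i < k → v k = 0) :
    pairing l u v = ∑ j ∈ Finset.range (l i),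
      (u i %ₘ (X ^ l i - 1)).coeff j * (v i %ₘ (X ^ l i - 1)).coeff j := by
  refine Finset.sum_eq_single i (fun k _ hki => Finset.sum_eq_zero fun j _ => ?_) (by simp)
  rcases hki.lt_or_gt with hk | hk
  · simp [hu k hk]
  · simp [hv k hk]

variable {l}

theorem modByMonic_X_pow_sub_one_mem_degreeLT {n : ℕ} (hn : 0 < n) (p : F[X]) :
    p %ₘ (X ^ n - 1) ∈ degreeLT F n := by
  rw [mem_degreeLT, ← degree_X_pow_sub_C hn (1 : F), C_1]
  exact degree_modByMonic_lt p (leadingCoeff_X_pow_sub_one hn)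

theorem modByMonic_X_pow_sub_one_eq_self {n : ℕ} (hn : 0 < n) {p : F[X]}
    (hp : p ∈ degreeLT F n) : p %ₘ (X ^ n - 1) = p := by
  rw [modByMonic_eq_self_iff (leadingCoeff_X_pow_sub_one hn), ← C_1, degree_X_pow_sub_C hn]
  exact mem_degreeLT.1 hp

theorem reduce_surjective (hl : ∀ j, 0 < l j) : Function.Surjective (reduce (F := F) l) := by
  intro y
  let c : Fin m → F[X] := fun j => (degreeLTEquiv F (l j)).symm fun k => y ⟨j, k⟩
  refine ⟨c, funext fun ⟨j, k⟩ => ?_⟩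
  rw [reduce_apply, modByMonic_X_pow_sub_one_eq_self (hl j) (Submodule.coe_mem _)]
  exact congrFun ((degreeLTEquiv F (l j)).apply_symm_apply _) k

theorem reduce_eq_zero_iff (hl : ∀ j, 0 < l j) {c : Fin m → F[X]} :
    reduce l c = 0 ↔ ∀ j, X ^ l j - 1 ∣ c j := by
  simp only [funext_iff, Sigma.forall, Pi.zero_apply, reduce_apply]
  refine forall_congr' fun j => ?_
  rw [← modByMonic_eq_zero_iff_dvd (leadingCoeff_X_pow_sub_one (hl j)),
    ← degreeLTEquiv_eq_zero_iff_eq_zero (modByMonic_X_pow_sub_one_mem_degreeLT (hl j) _),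
    funext_iff]
  rfl

theorem mem_of_reduce_eq (hl : ∀ j, 0 < l j) {E : Submodule F[X] (Fin m → F[X])}
    (hE : ∀ j, stdGen l j ∈ E) {c c' : Fin m → F[X]} (hc : c ∈ E)
    (h : reduce l c' = reduce l c) : c' ∈ E := by
  choose q hq using (reduce_eq_zero_iff hl).1 (by rw [map_sub, h, sub_self] : reduce l (c' - c) = 0)
  have hdiff : c' - c = ∑ j, q j • stdGen l j := by
    ext1 k
    simp [stdGen, Finset.sum_apply, hq k, mul_comm]
  rw [← sub_add_cancel c' c, hdiff]
  exact E.add_mem (E.sum_mem fun j _ => E.smul_mem _ (hE j)) hc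

end Reduction

theorem dotProduct_reduce_single_eq_zero {F : Type*} [Field F] {m : ℕ} {l : Fin m → ℕ}
    (hl : ∀ j, 0 < l j) {C : Submodule F[X] (Fin m → F[X])} (hXC : ∀ j, stdGen l j ∈ C)
    {i : Fin m} {q : F[X]} (hq : ∀ p ∈ sectionalIdeal C (· < i) i,
      ∑ j ∈ Finset.range (l i), (p %ₘ (X ^ l i - 1)).coeff j * (q %ₘ (X ^ l i - 1)).coeff j = 0)
    {c : Fin m → F[X]} (hc : c ∈ C) (hcz : ∀ a : Σ j, Fin (l j), a.1 < i → reduce l c a = 0) :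
    reduce l c ⬝ᵥ reduce l (Pi.single i q) = 0 := by
  set c' := {j | j < i}.piecewise 0 c
  have hred : reduce l c' = reduce l c := funext fun a => by
    rw [reduce_piecewise]
    split_ifs with ha
    · rw [map_zero, Pi.zero_apply, hcz a ha]
    · rfl
  have hc'z : ∀ k, k < i → c' k = 0 := fun k hk => by simp [c', hk]
  rw [← hred, ← pairing_eq_dotProduct,
    pairing_eq_sum_range_of_triangular l hc'z fun k hk => by simp [hk.ne'], Pi.single_eq_same]
  exact hq _ (mem_sectionalIdeal.2 ⟨c', mem_of_reduce_eq hl hXC hc hred, hc'z, rfl⟩)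

theorem mem_sectionalIdeal_dual_iff {F : Type*} [Field F] {m : ℕ} {l : Fin m → ℕ}
    (hl : ∀ j, 0 < l j) {C D : Submodule F[X] (Fin m → F[X])} (hXC : ∀ j, stdGen l j ∈ C)
    (hD : ∀ v, v ∈ D ↔ ∀ u ∈ C, pairing l u v = 0) (i : Fin m) (q : F[X]) :
    q ∈ sectionalIdeal D (i < ·) i ↔ ∀ p ∈ sectionalIdeal C (· < i) i,
      ∑ j ∈ Finset.range (l i),
        (p %ₘ (X ^ l i - 1)).coeff j * (q %ₘ (X ^ l i - 1)).coeff j = 0 := by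
  refine ⟨fun hq p hp => ?_, fun hq => ?_⟩
  · obtain ⟨v, hv, hvz, rfl⟩ := mem_sectionalIdeal.1 hq
    obtain ⟨c, hc, hcz, rfl⟩ := mem_sectionalIdeal.1 hp
    rw [← pairing_eq_sum_range_of_triangular l hcz hvz]
    exact (hD v).1 hv c hc
  obtain ⟨d, hdC, hdq⟩ := exists_orthogonal_eqOn_compl ((C.restrictScalars F).map (reduce l))
    {a | a.1 < i} (reduce l (Pi.single i q)) <| by
      rintro _ ⟨c, hc, rfl⟩ hcz
      exact dotProduct_reduce_single_eq_zero hl hXC hq hc hcz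
  obtain ⟨v, rfl⟩ := reduce_surjective hl d
  set v' := {j | i ≤ j}.piecewise (Pi.single i q) v
  have hred : reduce l v' = reduce l v := funext fun a => by
    rw [reduce_piecewise]
    split_ifs with ha
    · exact (hdq (x := a) (show ¬a.1 < i from not_lt.2 ha)).symm
    · rfl
  have hv'D : v' ∈ D := (hD v').2 fun u hu => by
    rw [pairing_eq_dotProduct, hred]
    exact hdC _ ⟨u, hu, rfl⟩
  refine mem_sectionalIdeal.2 ⟨v', hv'D, fun k hk => ?_, by simp [v']⟩
  simp [v', hk.le, hk.ne']

theorem stmt16_general (F : Type*) [Field F] (m : ℕ) (l : Fin m → ℕ)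
    (hl : ∀ i, 0 < l i)
    (C D : Submodule (Polynomial F) (Fin m → Polynomial F))
    (hXC : ∀ i, stdGen l i ∈ C)
    (hD : ∀ v : Fin m → Polynomial F, v ∈ D ↔ ∀ u ∈ C, pairing l u v = 0)
    (h : Fin m → Fin m → Polynomial F)
    (hhmem : ∀ i, h i ∈ D)
    (hhtri : ∀ i j : Fin m, i < j → h i j = 0)
    (hhne : ∀ i, h i i ≠ 0)
    (hhmin : ∀ i, ∀ v ∈ D, (∀ k, i < k → v k = 0) → v i ≠ 0 →
      (h i i).degree ≤ (v i).degree)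
    (g : Fin m → Fin m → Polynomial F)
    (hgmem : ∀ i, g i ∈ C)
    (hgtri : ∀ i j : Fin m, j < i → g i j = 0)
    (hgne : ∀ i, g i i ≠ 0)
    (hgmin : ∀ i, ∀ c ∈ C, (∀ j, j < i → c j = 0) → c i ≠ 0 →
      (g i i).degree ≤ (c i).degree)
    (i : Fin m) :
    (∀ p : Polynomial F,
      (∃ c ∈ C, (∀ k, k < i → c k = 0) ∧ c i = p) ↔ g i i ∣ p) ∧
    (∀ q : Polynomial F,
      h i i ∣ q ↔
        ∀ p : Polynomial F, (∃ c ∈ C, (∀ k, k < i → c k = 0) ∧ c i = p) →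
          ∑ j ∈ Finset.range (l i),
            (p %ₘ ((X : Polynomial F) ^ (l i) - 1)).coeff j *
              (q %ₘ ((X : Polynomial F) ^ (l i) - 1)).coeff j = 0) := by
  have hg := mem_sectionalIdeal_iff_dvd (hgmem i) (hgtri i) (hgne i) (hgmin i)
  have hh := mem_sectionalIdeal_iff_dvd (hhmem i) (hhtri i) (hhne i) (hhmin i)
  refine ⟨fun p => mem_sectionalIdeal.symm.trans (hg p), fun q => ?_⟩
  rw [← hh, mem_sectionalIdeal_dual_iff hl hXC hD]
  simp only [mem_sectionalIdeal]

/-- the `i`-th sectional shortened code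
`C_i = { c_i : (0,…,0,c_i,…,c_m) ∈ C̄ }` is the cyclic code of length `l_i` with generator
polynomial `g_{ii}` (the diagonal entry of any POT Gröbner basis of `C̄`), and its dual is the
cyclic code with generator polynomial `h_{ii}` (the diagonal entry of the rPOT Gröbner basis
of `C̄^⊥`). -/
theorem stmt16 (F : Type*) [Field F] [Fintype F] (m : ℕ) (l : Fin m → ℕ)
    (hl : ∀ i, 0 < l i)
    (C D : Submodule (Polynomial F) (Fin m → Polynomial F))
    (hXC : ∀ i, stdGen l i ∈ C)
    (hD : ∀ v : Fin m → Polynomial F, v ∈ D ↔ ∀ u ∈ C, pairing l u v = 0)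
    (h : Fin m → Fin m → Polynomial F)
    (hhmem : ∀ i, h i ∈ D)
    (hhtri : ∀ i j : Fin m, i < j → h i j = 0)
    (hhne : ∀ i, h i i ≠ 0)
    (hhmin : ∀ i, ∀ v ∈ D, (∀ k, i < k → v k = 0) → v i ≠ 0 →
      (h i i).degree ≤ (v i).degree)
    (g : Fin m → Fin m → Polynomial F)
    (hgmem : ∀ i, g i ∈ C)
    (hgtri : ∀ i j : Fin m, j < i → g i j = 0)
    (hgne : ∀ i, g i i ≠ 0)
    (hgmin : ∀ i, ∀ c ∈ C, (∀ j, j < i → c j = 0) → c i ≠ 0 →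
      (g i i).degree ≤ (c i).degree)
    (i : Fin m) :
    (∀ p : Polynomial F,
      (∃ c ∈ C, (∀ k, k < i → c k = 0) ∧ c i = p) ↔ g i i ∣ p) ∧
    (∀ q : Polynomial F,
      h i i ∣ q ↔
        ∀ p : Polynomial F, (∃ c ∈ C, (∀ k, k < i → c k = 0) ∧ c i = p) →
          ∑ j ∈ Finset.range (l i),
            (p %ₘ ((X : Polynomial F) ^ (l i) - 1)).coeff j *
              (q %ₘ ((X : Polynomial F) ^ (l i) - 1)).coeff j = 0) :=
  stmt16_general F m l hl C D hXC hD h hhmem hhtri hhne hhmin g hgmem hgtri hgne hgmin i
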